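/- Let S and T be algebraic theories with binary terms ⋄ (in S) and ⊗ (in T), each having a unit constant (e_⋄ with ⋄(x,e_⋄) =_S x =_S ⋄(e_⋄,x), and e_⊗ with ⊗(x,e_⊗) =_T x =_T ⊗(e_⊗,x)). Assume: in S, any term equal to a constant has no variables, any term equal to a variable x contains only x, and every S-term with at least one variable can be reduced to any one of its variables by a suitable substitution; in T, any term equal to a constant has no variables and any term equal to a variable x contains only x. If U is a composite theory of T after S, then ⋄ distributes over ⊗ in U: ⋄(⊗(y1,y2), x0) =_U ⊗(⋄(y1,x0), ⋄(y2,x0)) and ⋄(x0, ⊗(y1,y2)) =_U ⊗(⋄(x0,y1), ⋄(x0,y2)). -/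

import Mathlib

/-! ## Algebraic theories, equational logic, and composite theories (Pirog–Staton) -/

/-- An algebraic signature: a set of operation symbols with arities. -/
structure Sig : Type 1 where
  ops : Type
  ar : ops → ℕ

/-- Terms over a signature with variables in `X`. -/
inductive Tm (σ : Sig) (X : Type) : Type
  | var : X → Tm σ X
  | op : (g : σ.ops) → (Fin (σ.ar g) → Tm σ X) → Tm σ X

/-- Simultaneous substitution of terms for variables. -/
def Tm.bind {σ : Sig} {X Y : Type} : Tm σ X → (X → Tm σ Y) → Tm σ Y
  | .var x, f => f x
  | .op g a, f => .op g fun i => (a i).bind f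

/-- Substitution of variables for variables (renaming). -/
def Tm.rename {σ : Sig} {X Y : Type} (t : Tm σ X) (f : X → Y) : Tm σ Y :=
  t.bind fun x => .var (f x)

/-- The set of variables occurring in a term. -/
def Tm.vars {σ : Sig} {X : Type} : Tm σ X → Set X
  | .var x => {x}
  | .op _ a => ⋃ i, (a i).vars

/-- An algebraic theory: a signature together with a set of equations
(pairs of terms over natural-number variables). -/
structure Theory : Type 1 where
  sig : Sig
  axioms : Tm sig ℕ → Tm sig ℕ → Prop

/-- Provable equality in equational logic from the axioms of a theory. -/
inductive Theory.Eq (Th : Theory) : {X : Type} → Tm Th.sig X → Tm Th.sig X → Prop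
  | ax {X : Type} {l r : Tm Th.sig ℕ} (h : Th.axioms l r) (f : ℕ → Tm Th.sig X) :
      Theory.Eq Th (l.bind f) (r.bind f)
  | refl {X : Type} (t : Tm Th.sig X) : Theory.Eq Th t t
  | symm {X : Type} {a b : Tm Th.sig X} : Theory.Eq Th a b → Theory.Eq Th b a
  | trans {X : Type} {a b c : Tm Th.sig X} :
      Theory.Eq Th a b → Theory.Eq Th b c → Theory.Eq Th a c
  | congr {X : Type} (g : Th.sig.ops) {a b : Fin (Th.sig.ar g) → Tm Th.sig X}
      (h : ∀ i, Theory.Eq Th (a i) (b i)) : Theory.Eq Th (.op g a) (.op g b)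

/-- A theory is consistent if distinct variables are not provably equal. -/
def Theory.Consistent (Th : Theory) : Prop :=
  ∀ x y : ℕ, Th.Eq (X := ℕ) (.var x) (.var y) → x = y

/-- Disjoint union of signatures. -/
def Sig.sum (σ τ : Sig) : Sig := ⟨σ.ops ⊕ τ.ops, Sum.elim σ.ar τ.ar⟩

/-- Embedding of terms of the left signature into the sum. -/
def Tm.inL {σ τ : Sig} {X : Type} : Tm σ X → Tm (σ.sum τ) X
  | .var x => .var x
  | .op g a => .op (Sum.inl g) fun i => Tm.inL (a i)

/-- Embedding of terms of the right signature into the sum. -/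
def Tm.inR {σ τ : Sig} {X : Type} : Tm τ X → Tm (σ.sum τ) X
  | .var x => .var x
  | .op g a => .op (Sum.inr g) fun i => Tm.inR (a i)

/-- A separated term `t[s_x/x]`: a `τ`-term `t` whose variables are substituted
by `σ`-terms `s x`. -/
def sep {σ τ : Sig} {X : Type} (t : Tm τ X) (s : X → Tm σ ℕ) : Tm (σ.sum τ) ℕ :=
  (Tm.inR t).bind fun x => Tm.inL (s x)

/-- Equality modulo `(T, S)` of two separated terms, in the sense of Pirog and Staton. -/
def EqMod (S T : Theory) {X X' : Type}
    (t : Tm T.sig X) (s : X → Tm S.sig ℕ)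
    (t' : Tm T.sig X') (s' : X' → Tm S.sig ℕ) : Prop :=
  ∃ (Y : Type) (f₁ : X → Y) (f₂ : X' → Y) (sb : Y → Tm S.sig ℕ),
    T.Eq (t.rename f₁) (t'.rename f₂) ∧
    (∀ x, S.Eq (s x) (sb (f₁ x))) ∧
    (∀ x', S.Eq (s' x') (sb (f₂ x')))

/-- A composite theory of `T` after `S`: a theory on the disjoint union of the
signatures, containing both `S` and `T`, in which every term is provably equal to
a separated term (a `T`-term of `S`-terms), essentially uniquely. -/
structure Composite (S T : Theory) where
  axioms : Tm (S.sig.sum T.sig) ℕ → Tm (S.sig.sum T.sig) ℕ → Prop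
  containsS : ∀ {X : Type} (a b : Tm S.sig X), S.Eq a b →
    Theory.Eq ⟨S.sig.sum T.sig, axioms⟩ (Tm.inL a) (Tm.inL b)
  containsT : ∀ {X : Type} (a b : Tm T.sig X), T.Eq a b →
    Theory.Eq ⟨S.sig.sum T.sig, axioms⟩ (Tm.inR a) (Tm.inR b)
  separation : ∀ u : Tm (S.sig.sum T.sig) ℕ,
    ∃ (X : Type) (t : Tm T.sig X) (s : X → Tm S.sig ℕ),
      Theory.Eq ⟨S.sig.sum T.sig, axioms⟩ u (sep t s)
  essentiallyUnique : ∀ {X X' : Type} (t : Tm T.sig X) (s : X → Tm S.sig ℕ)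
      (t' : Tm T.sig X') (s' : X' → Tm S.sig ℕ),
      Theory.Eq ⟨S.sig.sum T.sig, axioms⟩ (sep t s) (sep t' s') →
      EqMod S T t s t' s'

/-- The underlying theory of a composite. -/
def Composite.theory {S T : Theory} (C : Composite S T) : Theory :=
  ⟨S.sig.sum T.sig, C.axioms⟩

/-- A set of terms is stable if it is closed under renaming of variables. -/
def Stable {σ : Sig} (Ts : Set (Tm σ ℕ)) : Prop :=
  ∀ t ∈ Ts, ∀ f : ℕ → ℕ, t.rename f ∈ Ts

/-- A set of terms is universal if every term is provably equal to one in the set. -/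
def Universal (Th : Theory) (Ts : Set (Tm Th.sig ℕ)) : Prop :=
  ∀ t : Tm Th.sig ℕ, ∃ t' ∈ Ts, Th.Eq t t'

/-- Apply a binary term (a term with variables among `0` and `1`) to two arguments. -/
def subst2 {σ : Sig} {X : Type} (b : Tm σ ℕ) (t u : Tm σ X) : Tm σ X :=
  b.bind fun i => if i = 0 then t else u


/-! ### Auxiliary lemmas -/

namespace Tm

theorem vars_var {σ : Sig} {X : Type} (x : X) : (Tm.var (σ := σ) x).vars = {x} := rfl

theorem vars_op {σ : Sig} {X : Type} (g : σ.ops) (a : Fin (σ.ar g) → Tm σ X) :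
    (Tm.op g a).vars = ⋃ i, (a i).vars := rfl

theorem bind_var' {σ : Sig} {X : Type} (t : Tm σ X) : t.bind .var = t := by
  induction t with
  | var x => rfl
  | op g a ih => exact congrArg _ (funext fun i => ih i)

theorem bind_bind {σ : Sig} {X Y Z : Type} (t : Tm σ X) (f : X → Tm σ Y) (g : Y → Tm σ Z) :
    (t.bind f).bind g = t.bind fun x => (f x).bind g := by
  induction t with
  | var x => rfl
  | op gg a ih => exact congrArg _ (funext fun i => ih i)

theorem mem_vars_bind {σ : Sig} {X Y : Type} {t : Tm σ X} {f : X → Tm σ Y} {y : Y} :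
    y ∈ (t.bind f).vars ↔ ∃ x ∈ t.vars, y ∈ (f x).vars := by
  induction t with
  | var x => simp [bind, vars]
  | op g a ih =>
      simp only [bind, vars, Set.mem_iUnion, ih]
      tauto

theorem bind_congr' {σ : Sig} {X Y : Type} {t : Tm σ X} {f g : X → Tm σ Y}
    (h : ∀ x ∈ t.vars, f x = g x) : t.bind f = t.bind g := by
  induction t with
  | var x => exact h x rfl
  | op gg a ih =>
      show Tm.op gg (fun i => (a i).bind f) = Tm.op gg (fun i => (a i).bind g)
      refine congrArg _ (funext fun i => ih i fun x hx => h x ?_)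
      rw [vars_op]; exact Set.mem_iUnion.2 ⟨i, hx⟩

theorem bind_closed {σ : Sig} {X : Type} {t : Tm σ X} (h : t.vars = ∅) (f : X → Tm σ X) :
    t.bind f = t := by
  rw [bind_congr' (g := .var) (fun x hx => by rw [h] at hx; exact absurd hx (Set.notMem_empty x)),
    bind_var']

theorem vars_inL {σ τ : Sig} {X : Type} (t : Tm σ X) : (Tm.inL (τ := τ) t).vars = t.vars := by
  induction t with
  | var x => rfl
  | op g a ih => exact congrArg _ (funext fun i => ih i)

theorem vars_inR {σ τ : Sig} {X : Type} (t : Tm τ X) : (Tm.inR (σ := σ) t).vars = t.vars := by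
  induction t with
  | var x => rfl
  | op g a ih => exact congrArg _ (funext fun i => ih i)

theorem inL_bind {σ τ : Sig} {X Y : Type} (t : Tm σ X) (f : X → Tm σ Y) :
    Tm.inL (τ := τ) (t.bind f) = (Tm.inL t).bind fun x => Tm.inL (f x) := by
  induction t with
  | var x => rfl
  | op g a ih => exact congrArg _ (funext fun i => ih i)

theorem inR_bind {σ τ : Sig} {X Y : Type} (t : Tm τ X) (f : X → Tm τ Y) :
    Tm.inR (σ := σ) (t.bind f) = (Tm.inR t).bind fun x => Tm.inR (f x) := by
  induction t with
  | var x => rfl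
  | op g a ih => exact congrArg _ (funext fun i => ih i)

end Tm

theorem Theory.Eq.bind' {Th : Theory} {X : Type} {a b : Tm Th.sig X} (h : Th.Eq a b) :
    ∀ {Y : Type} (f : X → Tm Th.sig Y), Th.Eq (a.bind f) (b.bind f) := by
  induction h with
  | ax hax f₀ =>
      intro Y f; rw [Tm.bind_bind, Tm.bind_bind]; exact .ax hax _
  | refl t => intro Y f; exact .refl _
  | symm h ih => intro Y f; exact (ih f).symm
  | trans h₁ h₂ ih₁ ih₂ => intro Y f; exact (ih₁ f).trans (ih₂ f)
  | congr g hch ih => intro Y f; exact .congr g fun i => ih i f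

theorem Theory.Eq.bindCongr {Th : Theory} {X Y : Type} (t : Tm Th.sig X)
    {f g : X → Tm Th.sig Y} (h : ∀ x ∈ t.vars, Th.Eq (f x) (g x)) :
    Th.Eq (t.bind f) (t.bind g) := by
  induction t with
  | var x => exact h x rfl
  | op gg a ih =>
      refine .congr gg fun i => ih i fun x hx => h x ?_
      rw [Tm.vars_op]; exact Set.mem_iUnion.2 ⟨i, hx⟩

/-- Provable equality in a theory with a constant preserves the set of variables
(`ℕ`-variables version). -/
theorem varsPres (Th : Theory) (e : Tm Th.sig ℕ) (he : e.vars = ∅)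
    (h0 : ∀ a b : Tm Th.sig ℕ, a.vars = ∅ → Th.Eq a b → b.vars = ∅)
    {a b : Tm Th.sig ℕ} (h : Th.Eq a b) : a.vars = b.vars := by
  classical
  have main : ∀ {a b : Tm Th.sig ℕ}, Th.Eq a b → ∀ z ∈ a.vars, z ∈ b.vars := by
    intro a b h z hz
    by_contra hz'
    set f : ℕ → Tm Th.sig ℕ := fun v => if v = z then Tm.var 0 else e with hf
    have hbf : (b.bind f).vars = ∅ := by
      apply Set.eq_empty_iff_forall_notMem.2
      intro y hy
      obtain ⟨v, hv, hyv⟩ := Tm.mem_vars_bind.1 hy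
      have hvz : v ≠ z := fun hvzeq => hz' (hvzeq ▸ hv)
      rw [hf] at hyv; simp only [if_neg hvz] at hyv
      rw [he] at hyv; exact hyv
    have haf : (a.bind f).vars = ∅ := h0 _ _ hbf (h.symm.bind' f)
    have : (0 : ℕ) ∈ (a.bind f).vars :=
      Tm.mem_vars_bind.2 ⟨z, hz, by rw [hf]; simp [Tm.vars]⟩
    rw [haf] at this; exact this
  exact Set.ext fun z => ⟨main h z, main h.symm z⟩

/-- Variable preservation over an arbitrary type of variables. -/
theorem varsPresX (Th : Theory) (e : Tm Th.sig ℕ) (he : e.vars = ∅)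
    (h0 : ∀ a b : Tm Th.sig ℕ, a.vars = ∅ → Th.Eq a b → b.vars = ∅)
    {Z : Type} {A B : Tm Th.sig Z} (h : Th.Eq A B) : A.vars = B.vars := by
  classical
  have main : ∀ {A B : Tm Th.sig Z}, Th.Eq A B → ∀ z ∈ A.vars, z ∈ B.vars := by
    intro A B h z hz
    by_contra hz'
    set χ : Z → ℕ := fun u => if u = z then 0 else 1 with hχ
    have hr := varsPres Th e he h0 (h.bind' fun u => Tm.var (χ u))
    have h0A : (0 : ℕ) ∈ (A.bind fun u => Tm.var (χ u)).vars :=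
      Tm.mem_vars_bind.2 ⟨z, hz, by rw [hχ]; simp [Tm.vars]⟩
    rw [hr] at h0A
    obtain ⟨u, hu, h0u⟩ := Tm.mem_vars_bind.1 h0A
    have h0u' : (0 : ℕ) = χ u := by
      simpa [Tm.vars] using h0u
    rw [hχ] at h0u'
    by_cases huz : u = z
    · exact hz' (huz ▸ hu)
    · simp only [if_neg huz] at h0u'; exact absurd h0u'.symm one_ne_zero
  exact Set.ext fun z => ⟨main h z, main h.symm z⟩


theorem Tm.inL_var {σ τ : Sig} {X : Type} (x : X) :
    Tm.inL (σ := σ) (τ := τ) (Tm.var x) = Tm.var x := rfl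

theorem Tm.inR_var {σ τ : Sig} {X : Type} (x : X) :
    Tm.inR (σ := σ) (τ := τ) (Tm.var x) = Tm.var x := rfl

theorem Tm.inL_subst2 {σ τ : Sig} {X : Type} (b : Tm σ ℕ) (u v : Tm σ X) :
    Tm.inL (τ := τ) (subst2 b u v) = subst2 (Tm.inL b) (Tm.inL u) (Tm.inL v) := by
  rw [subst2, subst2, Tm.inL_bind]
  exact Tm.bind_congr' fun i _ => by by_cases hi : i = 0 <;> simp [hi, Tm.inL_var, Tm.inR_var]

theorem swap_subst2 {σ : Sig} {X : Type} (b : Tm σ ℕ) (A B : Tm σ X) :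
    subst2 (subst2 b (.var 1) (.var 0)) A B = subst2 b B A := by
  rw [subst2, subst2, subst2, Tm.bind_bind]
  refine Tm.bind_congr' fun i _ => ?_
  by_cases hi : i = 0 <;> simp [hi, Tm.bind]

section Units

variable {S T : Theory} (C : Composite S T)

theorem unitSR (d eS : Tm S.sig ℕ) (heS : eS.vars = ∅)
    (hdUnitR : S.Eq (subst2 d (.var 0) eS) (.var 0))
    (A : Tm (S.sig.sum T.sig) ℕ) :
    C.theory.Eq ((Tm.inL (τ := T.sig) d).bind fun i => if i = 0 then A else Tm.inL eS) A := by
  have h := (C.containsS _ _ hdUnitR).bind' (fun n => if n = 0 then A else .var n)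
  have e1 : Tm.inL (τ := T.sig) (subst2 d (.var 0) eS)
      = (Tm.inL (τ := T.sig) d).bind fun i => if i = 0 then .var 0 else Tm.inL eS := by
    rw [subst2, Tm.inL_bind]
    exact Tm.bind_congr' fun i _ => by by_cases hi : i = 0 <;> simp [hi, Tm.inL_var, Tm.inR_var]
  rw [e1, Tm.bind_bind] at h
  have e2 : (fun i => (if i = 0 then (Tm.var 0 : Tm (S.sig.sum T.sig) ℕ) else Tm.inL eS).bind
        (fun n => if n = 0 then A else .var n))
      = fun i => if i = 0 then A else Tm.inL eS := by
    funext i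
    by_cases hi : i = 0
    · simp [hi, Tm.bind]
    · simp only [if_neg hi]
      exact Tm.bind_closed (by rw [Tm.vars_inL]; exact heS) _
  rw [e2] at h
  have e3 : (Tm.inL (τ := T.sig) (Tm.var 0)).bind (fun n => if n = 0 then A else .var n) = A := rfl
  rw [e3] at h
  exact h

theorem unitSL (d eS : Tm S.sig ℕ) (heS : eS.vars = ∅)
    (hdUnitL : S.Eq (subst2 d eS (.var 0)) (.var 0))
    (A : Tm (S.sig.sum T.sig) ℕ) :
    C.theory.Eq ((Tm.inL (τ := T.sig) d).bind fun i => if i = 0 then Tm.inL eS else A) A := by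
  have h := (C.containsS _ _ hdUnitL).bind' (fun n => if n = 0 then A else .var n)
  have e1 : Tm.inL (τ := T.sig) (subst2 d eS (.var 0))
      = (Tm.inL (τ := T.sig) d).bind fun i => if i = 0 then Tm.inL eS else .var 0 := by
    rw [subst2, Tm.inL_bind]
    exact Tm.bind_congr' fun i _ => by by_cases hi : i = 0 <;> simp [hi, Tm.inL_var, Tm.inR_var]
  rw [e1, Tm.bind_bind] at h
  have e2 : (fun i => (if i = 0 then Tm.inL (τ := T.sig) eS else (Tm.var 0 : Tm (S.sig.sum T.sig) ℕ)).bind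
        (fun n => if n = 0 then A else .var n))
      = fun i => if i = 0 then Tm.inL eS else A := by
    funext i
    by_cases hi : i = 0
    · simp only [if_pos hi]
      exact Tm.bind_closed (by rw [Tm.vars_inL]; exact heS) _
    · simp [hi, Tm.bind]
  rw [e2] at h
  have e3 : (Tm.inL (τ := T.sig) (Tm.var 0)).bind (fun n => if n = 0 then A else .var n) = A := rfl
  rw [e3] at h
  exact h

theorem unitTR (t eT : Tm T.sig ℕ) (heT : eT.vars = ∅)
    (htUnitR : T.Eq (subst2 t (.var 0) eT) (.var 0))
    (A : Tm (S.sig.sum T.sig) ℕ) :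
    C.theory.Eq ((Tm.inR (σ := S.sig) t).bind fun i => if i = 0 then A else Tm.inR eT) A := by
  have h := (C.containsT _ _ htUnitR).bind' (fun n => if n = 0 then A else .var n)
  have e1 : Tm.inR (σ := S.sig) (subst2 t (.var 0) eT)
      = (Tm.inR (σ := S.sig) t).bind fun i => if i = 0 then .var 0 else Tm.inR eT := by
    rw [subst2, Tm.inR_bind]
    exact Tm.bind_congr' fun i _ => by by_cases hi : i = 0 <;> simp [hi, Tm.inL_var, Tm.inR_var]
  rw [e1, Tm.bind_bind] at h
  have e2 : (fun i => (if i = 0 then (Tm.var 0 : Tm (S.sig.sum T.sig) ℕ) else Tm.inR eT).bind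
        (fun n => if n = 0 then A else .var n))
      = fun i => if i = 0 then A else Tm.inR eT := by
    funext i
    by_cases hi : i = 0
    · simp [hi, Tm.bind]
    · simp only [if_neg hi]
      exact Tm.bind_closed (by rw [Tm.vars_inR]; exact heT) _
  rw [e2] at h
  have e3 : (Tm.inR (σ := S.sig) (Tm.var 0)).bind (fun n => if n = 0 then A else .var n) = A := rfl
  rw [e3] at h
  exact h

theorem unitTL (t eT : Tm T.sig ℕ) (heT : eT.vars = ∅)
    (htUnitL : T.Eq (subst2 t eT (.var 0)) (.var 0))
    (A : Tm (S.sig.sum T.sig) ℕ) :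
    C.theory.Eq ((Tm.inR (σ := S.sig) t).bind fun i => if i = 0 then Tm.inR eT else A) A := by
  have h := (C.containsT _ _ htUnitL).bind' (fun n => if n = 0 then A else .var n)
  have e1 : Tm.inR (σ := S.sig) (subst2 t eT (.var 0))
      = (Tm.inR (σ := S.sig) t).bind fun i => if i = 0 then Tm.inR eT else .var 0 := by
    rw [subst2, Tm.inR_bind]
    exact Tm.bind_congr' fun i _ => by by_cases hi : i = 0 <;> simp [hi, Tm.inL_var, Tm.inR_var]
  rw [e1, Tm.bind_bind] at h
  have e2 : (fun i => (if i = 0 then Tm.inR (σ := S.sig) eT else (Tm.var 0 : Tm (S.sig.sum T.sig) ℕ)).bind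
        (fun n => if n = 0 then A else .var n))
      = fun i => if i = 0 then Tm.inR eT else A := by
    funext i
    by_cases hi : i = 0
    · simp only [if_pos hi]
      exact Tm.bind_closed (by rw [Tm.vars_inR]; exact heT) _
    · simp [hi, Tm.bind]
  rw [e2] at h
  have e3 : (Tm.inR (σ := S.sig) (Tm.var 0)).bind (fun n => if n = 0 then A else .var n) = A := rfl
  rw [e3] at h
  exact h

end Units


/-- Key per-slot analysis: if a separated term `sep t' s'` represents
`(y₁ ⊗ y₂) ⋄ x₀`, then any slot `x` occurring in `t'` whose `S`-part does not
contain the variable `k` (one of the two `⊗`-variables) must be `S`-equal to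
`y_m ⋄ x₀` where `m` is the other `⊗`-variable. -/
theorem slotKey (S T : Theory) (d eS : Tm S.sig ℕ) (heS : eS.vars = ∅)
    (t eT : Tm T.sig ℕ) (heT : eT.vars = ∅)
    (htUnitR : T.Eq (subst2 t (.var 0) eT) (.var 0))
    (htUnitL : T.Eq (subst2 t eT (.var 0)) (.var 0))
    (hT0 : ∀ a b : Tm T.sig ℕ, a.vars = ∅ → T.Eq a b → b.vars = ∅)
    (C : Composite S T) {X : Type} (t' : Tm T.sig X) (s' : X → Tm S.sig ℕ)
    (hw : C.theory.Eq
      (subst2 (Tm.inL (τ := T.sig) d)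
        (subst2 (Tm.inR (σ := S.sig) t) (.var 0) (.var 1)) (.var 2))
      (sep t' s'))
    (x : X) (hx : x ∈ t'.vars) (k m : ℕ) (hkm : k = 0 ∧ m = 1 ∨ k = 1 ∧ m = 0)
    (hxk : k ∉ (s' x).vars) :
    S.Eq (s' x) (subst2 d (.var m) (.var 2)) := by
  classical
  set B : Tm (S.sig.sum T.sig) ℕ := subst2 (Tm.inR (σ := S.sig) t) (.var 0) (.var 1) with hB
  set W : Tm (S.sig.sum T.sig) ℕ := subst2 (Tm.inL (τ := T.sig) d) B (.var 2) with hW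
  set Dm : Tm S.sig ℕ := subst2 d (.var m) (.var 2) with hDm
  set δ : ℕ → Tm (S.sig.sum T.sig) ℕ := fun n => if n = k then Tm.inR eT else .var n with hδ
  have hk2 : k ≠ 2 := by rcases hkm with ⟨h, _⟩ | ⟨h, _⟩ <;> omega
  -- Step A : (W.bind δ) is provably equal to inL Dm
  have e1 : W.bind δ = (Tm.inL (τ := T.sig) d).bind fun i => if i = 0 then B.bind δ else .var 2 := by
    rw [hW, subst2, Tm.bind_bind]
    refine Tm.bind_congr' fun i _ => ?_
    by_cases hi : i = 0
    · simp [hi]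
    · simp only [if_neg hi]
      show δ 2 = Tm.var 2
      rw [hδ]; simp [Ne.symm hk2]
  have hBδ : C.theory.Eq (B.bind δ) (.var m) := by
    rcases hkm with ⟨hk, hm⟩ | ⟨hk, hm⟩
    · -- k = 0, m = 1 : B.bind δ = t(e⊗, y₂) ≈ y₂
      have e2 : B.bind δ
          = (Tm.inR (σ := S.sig) t).bind fun i => if i = 0 then Tm.inR eT else .var 1 := by
        rw [hB, subst2, Tm.bind_bind]
        refine Tm.bind_congr' fun i _ => ?_
        by_cases hi : i = 0
        · simp only [if_pos hi]
          show δ 0 = Tm.inR eT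
          rw [hδ]; simp [hk]
        · simp only [if_neg hi]
          show δ 1 = Tm.var 1
          rw [hδ]; simp [hk]
      rw [e2, hm]
      exact unitTL C t eT heT htUnitL (.var 1)
    · -- k = 1, m = 0 : B.bind δ = t(y₁, e⊗) ≈ y₁
      have e2 : B.bind δ
          = (Tm.inR (σ := S.sig) t).bind fun i => if i = 0 then (.var 0) else Tm.inR eT := by
        rw [hB, subst2, Tm.bind_bind]
        refine Tm.bind_congr' fun i _ => ?_
        by_cases hi : i = 0
        · simp only [if_pos hi]
          show δ 0 = Tm.var 0
          rw [hδ]; simp [hk]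
        · simp only [if_neg hi]
          show δ 1 = Tm.inR eT
          rw [hδ]; simp [hk]
      rw [e2, hm]
      exact unitTR C t eT heT htUnitR (.var 0)
  have hWk : C.theory.Eq (W.bind δ) (Tm.inL Dm) := by
    rw [e1]
    have hlift : C.theory.Eq
        ((Tm.inL (τ := T.sig) d).bind fun i => if i = 0 then B.bind δ else .var 2)
        ((Tm.inL (τ := T.sig) d).bind fun i => if i = 0 then (.var m) else .var 2) := by
      refine Theory.Eq.bindCongr _ fun i _ => ?_
      by_cases hi : i = 0
      · simp only [if_pos hi]; exact hBδ
      · simp only [if_neg hi]; exact .refl _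
    have e3 : (Tm.inL (τ := T.sig) d).bind (fun i => if i = 0 then (Tm.var m) else .var 2)
        = Tm.inL Dm := by
      rw [hDm, subst2, Tm.inL_bind]
      refine (Tm.bind_congr' fun i _ => ?_).symm
      by_cases hi : i = 0 <;> simp [hi, Tm.inL_var]
    rw [e3] at hlift
    exact hlift
  -- Step B : re-separate each substituted slot and assemble
  have hsep : ∀ y : X, ∃ (Z : Type) (τ : Tm T.sig Z) (σ : Z → Tm S.sig ℕ),
      C.theory.Eq ((Tm.inL (s' y)).bind δ) (sep τ σ) := fun y =>
    C.separation ((Tm.inL (s' y)).bind δ)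
  choose XX τ σ hτ using hsep
  set t'' : Tm T.sig (Σ y : X, XX y) :=
    t'.bind (fun y => (τ y).rename (fun j => (⟨y, j⟩ : Σ y : X, XX y))) with ht''
  set s'' : (Σ y : X, XX y) → Tm S.sig ℕ := fun z => σ z.1 z.2 with hs''
  have hA : C.theory.Eq ((sep t' s').bind δ) (sep t'' s'') := by
    have st1 : (sep t' s').bind δ = (Tm.inR t').bind fun y => (Tm.inL (s' y)).bind δ := by
      rw [sep, Tm.bind_bind]
    have st3 : (Tm.inR (σ := S.sig) t').bind (fun y => sep (τ y) (σ y)) = sep t'' s'' := by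
      rw [sep, ht'', Tm.inR_bind, Tm.bind_bind]
      refine Tm.bind_congr' fun y _ => ?_
      rw [sep, Tm.rename, Tm.inR_bind, Tm.bind_bind]
      rfl
    rw [st1, ← st3]
    exact Theory.Eq.bindCongr _ fun y _ => hτ y
  have hMain : C.theory.Eq (sep t'' s'') (Tm.inL Dm) :=
    hA.symm.trans ((hw.bind' δ).symm.trans hWk)
  -- Step C : essential uniqueness against the pure-S separated form of inL Dm
  have hsepVar : (Tm.inL (τ := T.sig) Dm : Tm (S.sig.sum T.sig) ℕ)
      = sep (Tm.var 0 : Tm T.sig ℕ) (fun _ => Dm) := rfl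
  obtain ⟨Z, g1, g2, sc, hTT, hLc, hRc⟩ :=
    C.essentiallyUnique (Tm.var 0) (fun _ => Dm) t'' s''
      (by rw [← hsepVar]; exact hMain.symm)
  have hvars1 : ((Tm.var (σ := T.sig) 0).rename g1).vars = (t''.rename g2).vars :=
    varsPresX T eT heT hT0 hTT
  have hg2 : ∀ z ∈ t''.vars, g2 z = g1 0 := by
    intro z hz
    have hmem : g2 z ∈ (t''.rename g2).vars :=
      Tm.mem_vars_bind.2 ⟨z, hz, by simp [Tm.vars]⟩
    rw [← hvars1] at hmem
    have : g2 z = g1 0 ∨ False := by simpa [Tm.rename, Tm.bind, Tm.vars] using hmem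
    tauto
  -- Step D : the slot `x` itself is untouched by δ
  have hvx : (Tm.inL (τ := T.sig) (s' x)).bind δ = Tm.inL (s' x) := by
    have hpt : ∀ n ∈ (Tm.inL (τ := T.sig) (s' x)).vars, δ n = .var n := by
      intro n hn
      rw [Tm.vars_inL] at hn
      rw [hδ]
      refine if_neg fun h => hxk ?_
      rw [← h]; exact hn
    rw [Tm.bind_congr' hpt, Tm.bind_var']
  obtain ⟨Z2, b1, b2, sc2, hTT2, hL2, hR2⟩ :=
    C.essentiallyUnique (Tm.var 0) (fun _ => s' x) (τ x) (σ x)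
      (by
        have : (Tm.inL (τ := T.sig) (s' x) : Tm (S.sig.sum T.sig) ℕ)
            = sep (Tm.var 0 : Tm T.sig ℕ) (fun _ => s' x) := rfl
        rw [← this, ← hvx]
        exact hτ x)
  have hvars2 : ((Tm.var (σ := T.sig) 0).rename b1).vars = ((τ x).rename b2).vars :=
    varsPresX T eT heT hT0 hTT2
  have hb1mem : b1 0 ∈ ((τ x).rename b2).vars := by
    rw [← hvars2]; simp [Tm.rename, Tm.bind, Tm.vars]
  obtain ⟨j₀, hj₀, hmemj⟩ := Tm.mem_vars_bind.1 hb1mem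
  have hb2j : b2 j₀ = b1 0 := by
    have : b1 0 = b2 j₀ ∨ False := by simpa [Tm.vars] using hmemj
    tauto
  have hs'σ : S.Eq (s' x) (σ x j₀) :=
    (hL2 0).trans (by rw [← hb2j]; exact (hR2 j₀).symm)
  have hzmem : (⟨x, j₀⟩ : Σ y : X, XX y) ∈ t''.vars := by
    rw [ht'']
    exact Tm.mem_vars_bind.2 ⟨x, hx, Tm.mem_vars_bind.2 ⟨j₀, hj₀, by simp [Tm.vars]⟩⟩
  have hfin : S.Eq (σ x j₀) Dm :=
    (hRc ⟨x, j₀⟩).trans (by rw [hg2 _ hzmem]; exact (hLc 0).symm)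
  exact hs'σ.trans hfin

/-- Main lemma: left-distributivity `⋄(⊗(y₁,y₂), x₀) = ⊗(⋄(y₁,x₀), ⋄(y₂,x₀))`
holds in the composite theory. -/
theorem keyDistrib (S T : Theory)
    (d eS : Tm S.sig ℕ) (heS : eS.vars = ∅)
    (hdUnitR : S.Eq (subst2 d (.var 0) eS) (.var 0))
    (hS1 : ∀ (a : Tm S.sig ℕ) (x : ℕ), S.Eq a (.var x) → a.vars ⊆ {x})
    (t eT : Tm T.sig ℕ) (htv : t.vars ⊆ {0, 1}) (heT : eT.vars = ∅)
    (htUnitR : T.Eq (subst2 t (.var 0) eT) (.var 0))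
    (htUnitL : T.Eq (subst2 t eT (.var 0)) (.var 0))
    (hT0 : ∀ a b : Tm T.sig ℕ, a.vars = ∅ → T.Eq a b → b.vars = ∅)
    (C : Composite S T) :
    C.theory.Eq
        (subst2 (Tm.inL (τ := T.sig) d)
          (subst2 (Tm.inR (σ := S.sig) t) (.var 0) (.var 1)) (.var 2))
        (subst2 (Tm.inR (σ := S.sig) t)
          (subst2 (Tm.inL (τ := T.sig) d) (.var 0) (.var 2))
          (subst2 (Tm.inL (τ := T.sig) d) (.var 1) (.var 2))) := by
  classical
  obtain ⟨X, t', s', hw⟩ := C.separation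
    (subst2 (Tm.inL (τ := T.sig) d)
      (subst2 (Tm.inR (σ := S.sig) t) (.var 0) (.var 1)) (.var 2))
  set B : Tm (S.sig.sum T.sig) ℕ := subst2 (Tm.inR (σ := S.sig) t) (.var 0) (.var 1) with hB
  set W : Tm (S.sig.sum T.sig) ℕ := subst2 (Tm.inL (τ := T.sig) d) B (.var 2) with hW
  set δ2 : ℕ → Tm (S.sig.sum T.sig) ℕ := fun n => if n = 2 then Tm.inL eS else .var n with hδ2
  set g0 : ℕ → Tm S.sig ℕ := fun n => if n = 2 then eS else .var n with hg0
  set q : X → Tm S.sig ℕ := fun y => (s' y).bind g0 with hq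
  -- Step 1 : substituting e⋄ for x₀ gives `y₁ ⊗ y₂`
  have hsepq : (sep t' s').bind δ2 = sep t' q := by
    rw [sep, sep, Tm.bind_bind]
    refine Tm.bind_congr' fun y _ => ?_
    rw [hq, Tm.inL_bind]
    refine (Tm.bind_congr' fun n _ => ?_).symm
    rw [hg0, hδ2]
    by_cases hn : n = 2 <;> simp [hn, Tm.inL_var]
  have hsepvar : sep t (fun n => Tm.var n) = Tm.inR (σ := S.sig) t := by
    rw [sep]
    have : ∀ n ∈ (Tm.inR (σ := S.sig) t).vars,
        Tm.inL (σ := S.sig) (τ := T.sig) (Tm.var n) = .var n :=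
      fun n _ => Tm.inL_var n
    rw [Tm.bind_congr' this, Tm.bind_var']
  have hWq : C.theory.Eq (W.bind δ2) (Tm.inR t) := by
    have e1 : W.bind δ2
        = (Tm.inL (τ := T.sig) d).bind fun i => if i = 0 then B.bind δ2 else Tm.inL eS := by
      rw [hW, subst2, Tm.bind_bind]
      refine Tm.bind_congr' fun i _ => ?_
      by_cases hi : i = 0
      · simp [hi]
      · simp only [if_neg hi]
        show δ2 2 = Tm.inL eS
        rw [hδ2]; simp
    have e2 : B.bind δ2 = B := by
      rw [hB, subst2, Tm.bind_bind]
      refine Tm.bind_congr' fun i _ => ?_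
      by_cases hi : i = 0 <;> simp [hi, hδ2, Tm.bind]
    have e4 : B = Tm.inR (σ := S.sig) t := by
      rw [hB, subst2]
      have : ∀ i ∈ (Tm.inR (σ := S.sig) t).vars,
          (if i = 0 then (Tm.var 0 : Tm (S.sig.sum T.sig) ℕ) else .var 1) = .var i := by
        intro i hi
        rw [Tm.vars_inR] at hi
        have hi01 := htv hi
        rcases hi01 with h0 | h1
        · simp [h0]
        · simp at h1; simp [h1]
      rw [Tm.bind_congr' this, Tm.bind_var']
    rw [e1, e2, e4]
    exact unitSR C d eS heS hdUnitR (Tm.inR t)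
  have hchain : C.theory.Eq (sep t' q) (sep t (fun n => Tm.var n)) := by
    rw [← hsepq, hsepvar]
    exact (hw.bind' δ2).symm.trans hWq
  obtain ⟨Y, f1, f2, sb, hi, hii, hiii⟩ := C.essentiallyUnique t' q t (fun n => Tm.var n) hchain
  -- Step 2 : every variable of t' lands (under f1) on f2 0 or f2 1
  have hclass : ∀ y ∈ t'.vars, f1 y = f2 0 ∨ f1 y = f2 1 := by
    intro y hy
    by_contra hcon
    push_neg at hcon
    obtain ⟨hne0, hne1⟩ := hcon
    set χ : Y → ℕ := fun z => if z = f1 y then 1 else 0 with hχ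
    have hren := varsPres T eT heT hT0 (hi.bind' fun z => Tm.var (χ z))
    have hmem1 : (1 : ℕ) ∈ ((t'.rename f1).bind fun z => Tm.var (χ z)).vars := by
      refine Tm.mem_vars_bind.2 ⟨f1 y, ?_, ?_⟩
      · exact Tm.mem_vars_bind.2 ⟨y, hy, by simp [Tm.vars]⟩
      · rw [hχ]; simp [Tm.vars]
    rw [hren] at hmem1
    obtain ⟨z, hz, h1z⟩ := Tm.mem_vars_bind.1 hmem1
    have hχz : χ z = 1 := by
      have : (1 : ℕ) = χ z ∨ False := by simpa [Tm.vars] using h1z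
      tauto
    have hzf1y : z = f1 y := by
      rw [hχ] at hχz
      by_cases hzz : z = f1 y
      · exact hzz
      · simp [hzz] at hχz
    obtain ⟨n, hn, hzn⟩ := Tm.mem_vars_bind.1 hz
    have hzfn : z = f2 n := by
      have : z = f2 n ∨ False := by simpa [Tm.vars] using hzn
      tauto
    have hf1f2 : f1 y = f2 n := by rw [← hzf1y, hzfn]
    have hn01 := htv hn
    rcases hn01 with h0 | h1
    · rw [h0] at hf1f2; exact hne0 hf1f2
    · simp only [Set.mem_singleton_iff] at h1
      rw [h1] at hf1f2; exact hne1 hf1f2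
  -- Step 3 : identify each slot of t'
  have hslot : ∀ y ∈ t'.vars,
      C.theory.Eq (Tm.inL (τ := T.sig) (s' y))
        (Tm.inL (τ := T.sig) (subst2 d (sb (f1 y)) (.var 2))) := by
    intro y hy
    have slotvars : ∀ nn : ℕ, S.Eq (q y) (.var nn) → (s' y).vars ⊆ {nn, 2} := by
      intro nn hqy v hv
      by_cases hv2 : v = 2
      · simp [hv2]
      · have hvq : v ∈ (q y).vars := by
          rw [hq]
          refine Tm.mem_vars_bind.2 ⟨v, hv, ?_⟩
          rw [hg0]; simp [hv2, Tm.vars]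
        have hvnn := hS1 _ nn hqy hvq
        simp only [Set.mem_singleton_iff] at hvnn
        simp [hvnn]
    rcases hclass y hy with hcy | hcy
    · -- f1 y = f2 0 : the slot is y₁ ⋄ x₀
      have hqy : S.Eq (q y) (.var 0) := (hii y).trans (by rw [hcy]; exact (hiii 0).symm)
      have hv := slotvars 0 hqy
      have hyk : (1 : ℕ) ∉ (s' y).vars := by
        intro hmem
        have := hv hmem
        simp at this
      have hsy := slotKey S T d eS heS t eT heT htUnitR htUnitL hT0 C t' s' hw y hy 1 0
        (Or.inr ⟨rfl, rfl⟩) hyk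
      refine C.containsS _ _ (hsy.trans ?_)
      rw [hcy]
      refine Theory.Eq.bindCongr d fun i _ => ?_
      by_cases hid : i = 0
      · simp only [if_pos hid]
        exact hiii 0
      · simp only [if_neg hid]
        exact .refl _
    · -- f1 y = f2 1 : the slot is y₂ ⋄ x₀
      have hqy : S.Eq (q y) (.var 1) := (hii y).trans (by rw [hcy]; exact (hiii 1).symm)
      have hv := slotvars 1 hqy
      have hyk : (0 : ℕ) ∉ (s' y).vars := by
        intro hmem
        have := hv hmem
        simp at this
      have hsy := slotKey S T d eS heS t eT heT htUnitR htUnitL hT0 C t' s' hw y hy 0 1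
        (Or.inl ⟨rfl, rfl⟩) hyk
      refine C.containsS _ _ (hsy.trans ?_)
      rw [hcy]
      refine Theory.Eq.bindCongr d fun i _ => ?_
      by_cases hid : i = 0
      · simp only [if_pos hid]
        exact hiii 1
      · simp only [if_neg hid]
        exact .refl _
  -- Step 4 : assemble
  have hstep8 : C.theory.Eq (sep t' s')
      ((Tm.inR (σ := S.sig) t').bind fun y => Tm.inL (subst2 d (sb (f1 y)) (.var 2))) := by
    rw [sep]
    refine Theory.Eq.bindCongr _ fun y hy => ?_
    replace hy := (Set.ext_iff.1 (Tm.vars_inR (σ := S.sig) (τ := T.sig) t') y).1 hy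
    exact hslot y hy
  have hstep9 : C.theory.Eq
      ((Tm.inR (σ := S.sig) t').bind fun y => Tm.inL (subst2 d (sb (f1 y)) (.var 2)))
      ((Tm.inR (σ := S.sig) t).bind fun n => Tm.inL (subst2 d (sb (f2 n)) (.var 2))) := by
    have h9 := (C.containsT _ _ hi).bind' (fun z => Tm.inL (τ := T.sig) (subst2 d (sb z) (.var 2)))
    have e1 : (Tm.inR (σ := S.sig) (t'.rename f1)).bind
          (fun z => Tm.inL (τ := T.sig) (subst2 d (sb z) (.var 2)))
        = (Tm.inR (σ := S.sig) t').bind fun y => Tm.inL (subst2 d (sb (f1 y)) (.var 2)) := by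
      rw [Tm.rename, Tm.inR_bind, Tm.bind_bind]
      exact Tm.bind_congr' fun y _ => rfl
    have e2 : (Tm.inR (σ := S.sig) (t.rename f2)).bind
          (fun z => Tm.inL (τ := T.sig) (subst2 d (sb z) (.var 2)))
        = (Tm.inR (σ := S.sig) t).bind fun n => Tm.inL (subst2 d (sb (f2 n)) (.var 2)) := by
      rw [Tm.rename, Tm.inR_bind, Tm.bind_bind]
      exact Tm.bind_congr' fun y _ => rfl
    rw [e1, e2] at h9
    exact h9
  have hstep10a : C.theory.Eq
      ((Tm.inR (σ := S.sig) t).bind fun n => Tm.inL (subst2 d (sb (f2 n)) (.var 2)))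
      ((Tm.inR (σ := S.sig) t).bind fun n => Tm.inL (subst2 d (.var n) (.var 2))) := by
    refine Theory.Eq.bindCongr _ fun n _ => ?_
    refine C.containsS _ _ ?_
    refine Theory.Eq.bindCongr d fun i _ => ?_
    by_cases hid : i = 0
    · simp only [if_pos hid]
      exact (hiii n).symm
    · simp only [if_neg hid]
      exact .refl _
  have hstep10b : (Tm.inR (σ := S.sig) t).bind (fun n => Tm.inL (subst2 d (.var n) (.var 2)))
      = subst2 (Tm.inR (σ := S.sig) t)
          (subst2 (Tm.inL (τ := T.sig) d) (.var 0) (.var 2))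
          (subst2 (Tm.inL (τ := T.sig) d) (.var 1) (.var 2)) := by
    show _ = (Tm.inR (σ := S.sig) t).bind fun i =>
      if i = 0 then (subst2 (Tm.inL (τ := T.sig) d) (.var 0) (.var 2))
      else (subst2 (Tm.inL (τ := T.sig) d) (.var 1) (.var 2))
    refine Tm.bind_congr' fun n hn => ?_
    rw [Tm.vars_inR] at hn
    have hn01 := htv hn
    have einl : ∀ mm : ℕ, Tm.inL (τ := T.sig) (subst2 d (.var mm) (.var 2))
        = subst2 (Tm.inL (τ := T.sig) d) (.var mm) (.var 2) := by
      intro mm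
      rw [Tm.inL_subst2, Tm.inL_var, Tm.inL_var]
    rcases hn01 with h0 | h1
    · rw [h0, einl 0]
      simp
    · simp only [Set.mem_singleton_iff] at h1
      rw [h1, einl 1]
      simp
  exact hw.trans (hstep8.trans (hstep9.trans (hstep10b ▸ hstep10a)))
/-- times over plus. In any composite theory of `T` after `S`,
the unital binary term `⋄` of `S` distributes over the unital binary term `⊗` of `T`
(variables: `y₁ = 0`, `y₂ = 1`, `x₀ = 2`). -/
theorem times_over_plus (S T : Theory)
    (d eS : Tm S.sig ℕ) (hdv : d.vars ⊆ {0, 1}) (heS : eS.vars = ∅)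
    -- e_⋄ is a unit for ⋄
    (hdUnitR : S.Eq (subst2 d (.var 0) eS) (.var 0))
    (hdUnitL : S.Eq (subst2 d eS (.var 0)) (.var 0))
    -- in S, terms equal to constants have no variables
    (hS0 : ∀ a b : Tm S.sig ℕ, a.vars = ∅ → S.Eq a b → b.vars = ∅)
    -- in S, terms equal to a variable contain only that variable
    (hS1 : ∀ (a : Tm S.sig ℕ) (x : ℕ), S.Eq a (.var x) → a.vars ⊆ {x})
    -- every S-term with at least one variable is reducible to any of its variables
    (hSred : ∀ a : Tm S.sig ℕ, a.vars.Nonempty →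
      ∃ f : ℕ → Tm S.sig ℕ, ∀ x ∈ a.vars,
        S.Eq (a.bind fun y => if y = x then .var x else f y) (.var x))
    (t eT : Tm T.sig ℕ) (htv : t.vars ⊆ {0, 1}) (heT : eT.vars = ∅)
    -- e_⊗ is a unit for ⊗
    (htUnitR : T.Eq (subst2 t (.var 0) eT) (.var 0))
    (htUnitL : T.Eq (subst2 t eT (.var 0)) (.var 0))
    -- in T, terms equal to constants have no variables
    (hT0 : ∀ a b : Tm T.sig ℕ, a.vars = ∅ → T.Eq a b → b.vars = ∅)
    -- in T, terms equal to a variable contain only that variable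
    (hT1 : ∀ (a : Tm T.sig ℕ) (x : ℕ), T.Eq a (.var x) → a.vars ⊆ {x})
    (C : Composite S T) :
    C.theory.Eq
        (subst2 (Tm.inL (τ := T.sig) d)
          (subst2 (Tm.inR (σ := S.sig) t) (.var 0) (.var 1)) (.var 2))
        (subst2 (Tm.inR (σ := S.sig) t)
          (subst2 (Tm.inL (τ := T.sig) d) (.var 0) (.var 2))
          (subst2 (Tm.inL (τ := T.sig) d) (.var 1) (.var 2))) ∧
    C.theory.Eq
        (subst2 (Tm.inL (τ := T.sig) d) (.var 2)
          (subst2 (Tm.inR (σ := S.sig) t) (.var 0) (.var 1)))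
        (subst2 (Tm.inR (σ := S.sig) t)
          (subst2 (Tm.inL (τ := T.sig) d) (.var 2) (.var 0))
          (subst2 (Tm.inL (τ := T.sig) d) (.var 2) (.var 1))) := by
  constructor
  · exact keyDistrib S T d eS heS hdUnitR hS1 t eT htv heT htUnitR htUnitL hT0 C
  · have hd'UnitR : S.Eq (subst2 (subst2 d (.var 1) (.var 0)) (.var 0) eS) (.var 0) := by
      rw [swap_subst2]; exact hdUnitL
    have h2 := keyDistrib S T (subst2 d (.var 1) (.var 0)) eS heS hd'UnitR hS1 t eT htv heT
      htUnitR htUnitL hT0 C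
    have einld : Tm.inL (τ := T.sig) (subst2 d (.var 1) (.var 0))
        = subst2 (Tm.inL (τ := T.sig) d) (.var 1) (.var 0) := by
      rw [Tm.inL_subst2, Tm.inL_var, Tm.inL_var]
    rw [einld] at h2
    dsimp only [Composite.theory] at h2 ⊢
    rw [swap_subst2, swap_subst2, swap_subst2] at h2
    exact h2
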